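/- Let M_K, M_L, M_D, M_R, M_e be abelian groups equipped with group homomorphisms r_L : M_K → M_L, r_D : M_K → M_D, r_R : M_K → M_R and injective group homomorphisms s_L : M_L → M_e, s_D : M_D → M_e, s_R : M_R → M_e satisfying the compatibility s_L ∘ r_L = s_D ∘ r_D = s_R ∘ r_R. Then the following two conditions are equivalent. (A) The sequence M_K → M_L ⊕ M_D ⊕ M_R → M_e ⊕ M_e ⊕ M_e is exact at the middle term, where the first map sends x to (r_L x, r_D x, r_R x) and the second map sends (x, y, z) to (s_D y − s_L x, s_L x − s_R z, s_R z − s_D y); that is, the image of the first map equals the set of triples (x, y, z) with s_L x = s_D y = s_R z. (B) For every choice of pairwise distinct indices i, j, k in {L, D, R}, the image of r_i equals s_i⁻¹(image of s_j) ∩ s_i⁻¹(image of s_k) as a subgroup of M_i. -/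
import Mathlib


/-- The algebraic content of Proposition 5.6: for abelian groups
`M_K, M_L, M_D, M_R, M_e` with maps `r_• : M_K → M_•` and injective maps
`s_• : M_• → M_e` satisfying `s_L ∘ r_L = s_D ∘ r_D = s_R ∘ r_R`, the
following are equivalent:

(A) the sequence
`M_K → M_L ⊕ M_D ⊕ M_R → M_e³` is exact at the middle term, i.e. the image of
`x ↦ (r_L x, r_D x, r_R x)` equals the kernel of
`(x, y, z) ↦ (s_D y − s_L x, s_L x − s_R z, s_R z − s_D y)`, which is the set
of triples `(x, y, z)` with `s_L x = s_D y = s_R z`;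

(B) for every choice of pairwise distinct indices `i, j, k ∈ {L, D, R}`,
`im r_i = s_i⁻¹(im s_j) ∩ s_i⁻¹(im s_k)` as a subgroup of `M_i`. -/
theorem klein_two_slice_exactness_criterion
    (MK ML MD MR Me : Type*)
    [AddCommGroup MK] [AddCommGroup ML] [AddCommGroup MD] [AddCommGroup MR]
    [AddCommGroup Me]
    (rL : MK →+ ML) (rD : MK →+ MD) (rR : MK →+ MR)
    (sL : ML →+ Me) (sD : MD →+ Me) (sR : MR →+ Me)
    (hsL : Function.Injective sL) (hsD : Function.Injective sD)
    (hsR : Function.Injective sR)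
    (hLD : sL.comp rL = sD.comp rD) (hDR : sD.comp rD = sR.comp rR) :
    (∀ (x : ML) (y : MD) (z : MR),
        (∃ w : MK, rL w = x ∧ rD w = y ∧ rR w = z) ↔ (sL x = sD y ∧ sD y = sR z))
      ↔
    (rL.range = (sD.range.comap sL) ⊓ (sR.range.comap sL) ∧
     rD.range = (sL.range.comap sD) ⊓ (sR.range.comap sD) ∧
     rR.range = (sL.range.comap sR) ⊓ (sD.range.comap sR)) := by

  have hLD' : ∀ w, sL (rL w) = sD (rD w) := fun w => DFunLike.congr_fun hLD w
  have hDR' : ∀ w, sD (rD w) = sR (rR w) := fun w => DFunLike.congr_fun hDR w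
  constructor
  · intro hA
    refine ⟨?_, ?_, ?_⟩ <;> ext a <;>
      simp only [AddMonoidHom.mem_range, AddSubgroup.mem_inf, AddSubgroup.mem_comap,
        AddMonoidHom.mem_range]
    · constructor
      · rintro ⟨w, rfl⟩
        exact ⟨⟨rD w, (hLD' w).symm⟩, ⟨rR w, ((hLD' w).trans (hDR' w)).symm⟩⟩
      · rintro ⟨⟨y, hy⟩, ⟨z, hz⟩⟩
        obtain ⟨w, hw, -, -⟩ := (hA a y z).2 ⟨hy.symm, hy.trans hz.symm⟩
        exact ⟨w, hw⟩
    · constructor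
      · rintro ⟨w, rfl⟩
        exact ⟨⟨rL w, hLD' w⟩, ⟨rR w, (hDR' w).symm⟩⟩
      · rintro ⟨⟨x, hx⟩, ⟨z, hz⟩⟩
        obtain ⟨w, -, hw, -⟩ := (hA x a z).2 ⟨hx, hz.symm⟩
        exact ⟨w, hw⟩
    · constructor
      · rintro ⟨w, rfl⟩
        exact ⟨⟨rL w, (hLD' w).trans (hDR' w)⟩, ⟨rD w, hDR' w⟩⟩
      · rintro ⟨⟨x, hx⟩, ⟨y, hy⟩⟩
        obtain ⟨w, -, -, hw⟩ := (hA x y a).2 ⟨hx.trans hy.symm, hy⟩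
        exact ⟨w, hw⟩
  · rintro ⟨hB, -, -⟩ x y z
    constructor
    · rintro ⟨w, rfl, rfl, rfl⟩
      exact ⟨hLD' w, hDR' w⟩
    · rintro ⟨h1, h2⟩
      have hx : x ∈ rL.range := by
        rw [hB]
        exact ⟨⟨y, h1.symm⟩, ⟨z, (h1.trans h2).symm⟩⟩
      obtain ⟨w, rfl⟩ := hx
      refine ⟨w, rfl, hsD ?_, hsR ?_⟩
      · rw [← hLD' w, h1]
      · rw [← hDR' w, ← hLD' w, h1, h2]
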